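/- Let p, m, T, d be positive integers and let Y ∈ ℝ^{p×T}, Z ∈ ℝ^{m×T}, E ∈ ℝ^{p×T}, A ∈ ℝ^{p×m}, and for i = 1,…,d let P_i ∈ ℝ^{p×T} and Φ_i ∈ ℝ^{p×p}, with Y = A·Z + Σ_{i=1}^d Φ_i·P_i + E. Let λ_A > 0 satisfy λ_A ≥ (3/T)·‖E·Zᵀ‖₂ and λ_i > 0 satisfy λ_i ≥ (2/T)·‖E·P_iᵀ‖₂, define L(A',Φ'_1,…,Φ'_d) = (1/(2T))·‖Y − A'·Z − Σ_i Φ'_i·P_i‖_F² + λ_A·‖A'‖_* + Σ_i λ_i·‖Φ'_i‖_*, and suppose Â, Φ̂_1,…,Φ̂_d satisfy L(Â,Φ̂_1,…,Φ̂_d) ≤ L(A,Φ_1,…,Φ_d). For the error Δ_A = Â − A, let Δ_{A,2} be its projection onto the subspace orthogonal to the row and column spaces of A (that is, Δ_{A,2} = U_c·U_cᵀ·Δ_A·V_c·V_cᵀ, where [U_k U_c] and [V_k V_c] are orthogonal and A = U_k·D·V_kᵀ for some square matrix D), and let Δ_{A,1} = Δ_A − Δ_{A,2}; define Δ_{i,1},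 Δ_{i,2} analogously for Δ_i = Φ̂_i − Φ_i relative to Φ_i. Then λ_A·‖Δ_{A,2}‖_* + Σ_{i=1}^d λ_i·‖Δ_{i,2}‖_* ≤ 3·λ_A·‖Δ_{A,1}‖_* + 3·Σ_{i=1}^d λ_i·‖Δ_{i,1}‖_*. -/

import Mathlib

/-!
Expanding the square in the objective turns `L(Â, Φ̂) ≤ L(A, Φ)` into the basic inequality
`pen(Â, Φ̂) - pen(A, Φ) ≤ ⟨E, W⟩ / T`, where `W = Δ_A Z + ∑ Δ_i P_i` is the error in the fitted
signal, so that `⟨E, W⟩ = ⟨E Zᵀ, Δ_A⟩ + ∑ ⟨E P_iᵀ, Δ_i⟩` splits into blocks. In a block with truth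
`X`, error `Δ = Δ₁ + Δ₂` and noise matrix `G`, trace duality `⟨G, Δ⟩ ≤ ‖G‖₂ ‖Δ‖_*` and
`λ ≥ (c/T) ‖G‖₂` bound the noise term by `(λ/c) (‖Δ₁‖_* + ‖Δ₂‖_*)`; and since the row and column
spaces of `Δ₂` are orthogonal to those of `X`, the nuclear norm is additive on `X + Δ₂`, whence
`‖X + Δ‖_* ≥ ‖X‖_* + ‖Δ₂‖_* - ‖Δ₁‖_*`. Adding the blocks (`c = 3` for `A`, `c = 2` for the `Φ_i`)
leaves the cone condition.

Trace duality and the triangle inequality for `‖·‖_*` come from the right singular vectors `v_k`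
of `M`: `‖M‖_* = ∑ ‖M v_k‖`, and the polar factor `∑ ‖M v_k‖⁻¹ (M v_k) v_kᵀ` has operator norm
at most one and pairs with `M` to `‖M‖_*`.
-/

open Matrix

/-- Frobenius norm of a real matrix: `(tr(MᵀM))^{1/2}`. -/
noncomputable def frobNorm {m n : ℕ} (M : Matrix (Fin m) (Fin n) ℝ) : ℝ :=
  Real.sqrt ((Mᵀ * M).trace)

/-- Nuclear norm of a real matrix: the trace of the positive semidefinite
square root of `MᵀM` (= sum of singular values). -/
noncomputable def nuclearNorm {m n : ℕ} (M : Matrix (Fin m) (Fin n) ℝ) : ℝ :=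
  ((Matrix.posSemidef_conjTranspose_mul_self M).1.eigenvectorUnitary.1
    * diagonal (Real.sqrt ∘ (Matrix.posSemidef_conjTranspose_mul_self M).1.eigenvalues)
    * (star (Matrix.posSemidef_conjTranspose_mul_self M).1.eigenvectorUnitary : Matrix (Fin n) (Fin n) ℝ)).trace

/-- Spectral (ℓ2 → ℓ2 operator) norm of a real matrix: its largest singular value. -/
noncomputable def opNorm {m n : ℕ} (M : Matrix (Fin m) (Fin n) ℝ) : ℝ :=
  ‖LinearMap.toContinuousLinearMap (Matrix.toEuclideanLin M)‖

/-- The ℓ1 norm of the vectorization of a matrix. -/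
noncomputable def vecL1 {m n : ℕ} (M : Matrix (Fin m) (Fin n) ℝ) : ℝ :=
  ∑ i, ∑ j, |M i j|

/-- The ℓ∞ norm of the vectorization of a matrix. -/
noncomputable def vecLinf {m n : ℕ} (M : Matrix (Fin m) (Fin n) ℝ) : ℝ :=
  ⨆ i, ⨆ j, |M i j|

/-- Frobenius (trace) inner product of two matrices. -/
noncomputable def traceInner {m n : ℕ} (M N : Matrix (Fin m) (Fin n) ℝ) : ℝ :=
  (Mᵀ * N).trace

open scoped Classical in
/-- The inverse of the positive semidefinite square root of a positive semidefinite
matrix (junk value `0` if the matrix is not positive semidefinite). -/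
noncomputable def matInvSqrt {r : ℕ} (S : Matrix (Fin r) (Fin r) ℝ) :
    Matrix (Fin r) (Fin r) ℝ :=
  if h : S.PosSemidef then (h.1.eigenvectorUnitary.1 * diagonal (Real.sqrt ∘ h.1.eigenvalues)
    * (star h.1.eigenvectorUnitary : Matrix (Fin r) (Fin r) ℝ))⁻¹ else 0

section TraceInner
variable {a b c : ℕ}

lemma traceInner_comm (M N : Matrix (Fin a) (Fin b) ℝ) : traceInner M N = traceInner N M := by
  rw [traceInner, ← trace_transpose, transpose_mul, transpose_transpose, traceInner]

lemma frobNorm_sq (M : Matrix (Fin a) (Fin b) ℝ) : frobNorm M ^ 2 = traceInner M M :=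
  Real.sq_sqrt (by simpa using (posSemidef_conjTranspose_mul_self M).trace_nonneg)

lemma frobNorm_sub_sq (E W : Matrix (Fin a) (Fin b) ℝ) :
    frobNorm (E - W) ^ 2 = frobNorm E ^ 2 - 2 * traceInner E W + frobNorm W ^ 2 := by
  have hcomm := traceInner_comm W E
  simp only [frobNorm_sq, traceInner, transpose_sub, Matrix.sub_mul, Matrix.mul_sub,
    trace_sub] at hcomm ⊢
  rw [hcomm]
  ring

lemma traceInner_add_right (N X Y : Matrix (Fin a) (Fin b) ℝ) :
    traceInner N (X + Y) = traceInner N X + traceInner N Y := by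
  simp only [traceInner, Matrix.mul_add, trace_add]

lemma traceInner_mul_right (E : Matrix (Fin a) (Fin b) ℝ) (Δ : Matrix (Fin a) (Fin c) ℝ)
    (Z : Matrix (Fin c) (Fin b) ℝ) : traceInner E (Δ * Z) = traceInner (E * Zᵀ) Δ := by
  rw [traceInner, traceInner, transpose_mul, transpose_transpose, ← Matrix.mul_assoc,
    trace_mul_cycle]

lemma traceInner_sum_right {ι : Type*} (s : Finset ι) (N : Matrix (Fin a) (Fin b) ℝ)
    (X : ι → Matrix (Fin a) (Fin b) ℝ) :
    traceInner N (∑ i ∈ s, X i) = ∑ i ∈ s, traceInner N (X i) := by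
  simp only [traceInner, Matrix.mul_sum, trace_sum]

end TraceInner

open scoped RealInnerProductSpace

section SingularBasis
variable {m n : ℕ}

lemma inner_toEuclideanLin_toEuclideanLin {l : ℕ} (N : Matrix (Fin l) (Fin n) ℝ)
    (M : Matrix (Fin l) (Fin n) ℝ) (x y : EuclideanSpace ℝ (Fin n)) :
    ⟪toEuclideanLin N x, toEuclideanLin M y⟫ = ⟪x, toEuclideanLin (Nᵀ * M) y⟫ := by
  rw [← conjTranspose_eq_transpose_of_trivial, ← LinearMap.adjoint_inner_right,
    ← toEuclideanLin_conjTranspose_eq_adjoint]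
  simp

lemma traceInner_eq_sum_inner {ι : Type*} [Fintype ι] (N M : Matrix (Fin m) (Fin n) ℝ)
    (b : OrthonormalBasis ι ℝ (EuclideanSpace ℝ (Fin n))) :
    traceInner N M = ∑ i, ⟪toEuclideanLin N (b i), toEuclideanLin M (b i)⟫ := by
  simp_rw [inner_toEuclideanLin_toEuclideanLin, ← LinearMap.trace_eq_sum_inner, traceInner,
    toEuclideanLin_eq_toLin_orthonormal, Matrix.trace_toLin_eq]

lemma opNorm_nonneg (M : Matrix (Fin m) (Fin n) ℝ) : 0 ≤ opNorm M := norm_nonneg _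

lemma norm_toEuclideanLin_le (M : Matrix (Fin m) (Fin n) ℝ) (x : EuclideanSpace ℝ (Fin n)) :
    ‖toEuclideanLin M x‖ ≤ opNorm M * ‖x‖ :=
  (LinearMap.toContinuousLinearMap (toEuclideanLin M)).le_opNorm x

lemma opNorm_le_of_norm_le (M : Matrix (Fin m) (Fin n) ℝ) {c : ℝ} (hc : 0 ≤ c)
    (h : ∀ x, ‖toEuclideanLin M x‖ ≤ c * ‖x‖) : opNorm M ≤ c :=
  ContinuousLinearMap.opNorm_le_bound _ hc h

variable (M : Matrix (Fin m) (Fin n) ℝ)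

noncomputable abbrev rightSingularBasis :
    OrthonormalBasis (Fin n) ℝ (EuclideanSpace ℝ (Fin n)) :=
  (posSemidef_conjTranspose_mul_self M).1.eigenvectorBasis

lemma toEuclideanLin_transpose_mul_self_rightSingularBasis (k : Fin n) :
    toEuclideanLin (Mᵀ * M) (rightSingularBasis M k) =
      (posSemidef_conjTranspose_mul_self M).1.eigenvalues k • rightSingularBasis M k := by
  rw [toLpLin_apply, ← conjTranspose_eq_transpose_of_trivial,
    (posSemidef_conjTranspose_mul_self M).1.mulVec_eigenvectorBasis, WithLp.toLp_smul,
    WithLp.toLp_ofLp]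

lemma inner_toEuclideanLin_rightSingularBasis {j k : Fin n} (hjk : j ≠ k) :
    ⟪toEuclideanLin M (rightSingularBasis M j),
      toEuclideanLin M (rightSingularBasis M k)⟫ = 0 := by
  rw [inner_toEuclideanLin_toEuclideanLin, toEuclideanLin_transpose_mul_self_rightSingularBasis,
    inner_smul_right, (rightSingularBasis M).orthonormal.2 hjk, mul_zero]

lemma norm_toEuclideanLin_rightSingularBasis (k : Fin n) :
    ‖toEuclideanLin M (rightSingularBasis M k)‖ =
      √((posSemidef_conjTranspose_mul_self M).1.eigenvalues k) := by
  rw [norm_eq_sqrt_real_inner, inner_toEuclideanLin_toEuclideanLin,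
    toEuclideanLin_transpose_mul_self_rightSingularBasis, inner_smul_right,
    real_inner_self_eq_norm_sq, (rightSingularBasis M).orthonormal.1 k, one_pow, mul_one]

lemma norm_sq_sum_smul_toEuclideanLin_rightSingularBasis (a : Fin n → ℝ) :
    ‖∑ k, a k • toEuclideanLin M (rightSingularBasis M k)‖ ^ 2 =
      ∑ k, a k ^ 2 * ‖toEuclideanLin M (rightSingularBasis M k)‖ ^ 2 := by
  rw [← real_inner_self_eq_norm_sq, sum_inner]
  refine Finset.sum_congr rfl fun j _ => ?_
  rw [inner_sum, Finset.sum_eq_single j (fun k _ hkj => by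
      rw [real_inner_smul_left, real_inner_smul_right,
        inner_toEuclideanLin_rightSingularBasis M hkj.symm, mul_zero, mul_zero])
    (fun hj => absurd (Finset.mem_univ j) hj), real_inner_smul_left, real_inner_smul_right,
    real_inner_self_eq_norm_sq]
  ring

lemma nuclearNorm_eq_sum_norm :
    nuclearNorm M = ∑ k, ‖toEuclideanLin M (rightSingularBasis M k)‖ := by
  rw [nuclearNorm, trace_mul_cycle, Unitary.coe_star_mul_self, one_mul, trace_diagonal]
  simp [norm_toEuclideanLin_rightSingularBasis]

lemma nuclearNorm_nonneg : 0 ≤ nuclearNorm M := by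
  rw [nuclearNorm_eq_sum_norm]
  positivity

lemma traceInner_le_opNorm_mul_nuclearNorm (N : Matrix (Fin m) (Fin n) ℝ) :
    traceInner N M ≤ opNorm N * nuclearNorm M := by
  rw [traceInner_eq_sum_inner N M (rightSingularBasis M), nuclearNorm_eq_sum_norm, Finset.mul_sum]
  gcongr with k
  calc _ ≤ ‖toEuclideanLin N (rightSingularBasis M k)‖ *
        ‖toEuclideanLin M (rightSingularBasis M k)‖ := real_inner_le_norm _ _
    _ ≤ opNorm N * ‖toEuclideanLin M (rightSingularBasis M k)‖ := by
        gcongr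
        simpa using norm_toEuclideanLin_le N (rightSingularBasis M k)

-- `‖M v_k‖⁻¹ = 0` when `M v_k = 0`, so those terms drop out.
noncomputable def polarFactor : Matrix (Fin m) (Fin n) ℝ :=
  toEuclideanLin.symm (∑ k, ‖toEuclideanLin M (rightSingularBasis M k)‖⁻¹ •
    (innerₗ _ (rightSingularBasis M k)).smulRight (toEuclideanLin M (rightSingularBasis M k)))

lemma toEuclideanLin_polarFactor_apply (x : EuclideanSpace ℝ (Fin n)) :
    toEuclideanLin (polarFactor M) x =
      ∑ k, (‖toEuclideanLin M (rightSingularBasis M k)‖⁻¹ * ⟪rightSingularBasis M k, x⟫) •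
        toEuclideanLin M (rightSingularBasis M k) := by
  simp [polarFactor, mul_smul]

lemma toEuclideanLin_polarFactor_rightSingularBasis (j : Fin n) :
    toEuclideanLin (polarFactor M) (rightSingularBasis M j) =
      ‖toEuclideanLin M (rightSingularBasis M j)‖⁻¹ •
        toEuclideanLin M (rightSingularBasis M j) := by
  rw [toEuclideanLin_polarFactor_apply, Finset.sum_eq_single j]
  · rw [real_inner_self_eq_norm_sq, (rightSingularBasis M).orthonormal.1 j, one_pow, mul_one]
  · intro k _ hkj
    rw [(rightSingularBasis M).orthonormal.2 hkj, mul_zero, zero_smul]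
  · simp

lemma traceInner_polarFactor : traceInner (polarFactor M) M = nuclearNorm M := by
  rw [traceInner_eq_sum_inner _ M (rightSingularBasis M), nuclearNorm_eq_sum_norm]
  refine Finset.sum_congr rfl fun k _ => ?_
  rw [toEuclideanLin_polarFactor_rightSingularBasis, real_inner_smul_left,
    real_inner_self_eq_norm_sq, sq, ← mul_assoc, inv_mul_eq_div, div_self_mul_self]

lemma opNorm_polarFactor_le : opNorm (polarFactor M) ≤ 1 := by
  refine opNorm_le_of_norm_le _ zero_le_one fun x => le_of_sq_le_sq ?_ (by positivity)
  rw [toEuclideanLin_polarFactor_apply, norm_sq_sum_smul_toEuclideanLin_rightSingularBasis,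
    one_mul, ← (rightSingularBasis M).sum_sq_inner_right x]
  gcongr with k
  set t := ‖toEuclideanLin M (rightSingularBasis M k)‖
  calc (t⁻¹ * ⟪rightSingularBasis M k, x⟫) ^ 2 * t ^ 2
      = ⟪rightSingularBasis M k, x⟫ ^ 2 * (t⁻¹ * t) ^ 2 := by ring
    _ ≤ ⟪rightSingularBasis M k, x⟫ ^ 2 * 1 := by
        gcongr
        exact pow_le_one₀ (by positivity) inv_mul_le_one
    _ = _ := mul_one _

end SingularBasis

section NuclearNorm
variable {m n : ℕ}

lemma traceInner_le_nuclearNorm_of_opNorm_le_one {N : Matrix (Fin m) (Fin n) ℝ}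
    (hN : opNorm N ≤ 1) (M : Matrix (Fin m) (Fin n) ℝ) : traceInner N M ≤ nuclearNorm M :=
  (traceInner_le_opNorm_mul_nuclearNorm M N).trans
    (mul_le_of_le_one_left (nuclearNorm_nonneg M) hN)

lemma nuclearNorm_add_le (X Y : Matrix (Fin m) (Fin n) ℝ) :
    nuclearNorm (X + Y) ≤ nuclearNorm X + nuclearNorm Y := by
  rw [← traceInner_polarFactor, traceInner_add_right]
  exact add_le_add (traceInner_le_nuclearNorm_of_opNorm_le_one (opNorm_polarFactor_le _) X)
    (traceInner_le_nuclearNorm_of_opNorm_le_one (opNorm_polarFactor_le _) Y)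

open scoped MatrixOrder

lemma nuclearNorm_eq_trace_sqrt (M : Matrix (Fin m) (Fin n) ℝ) :
    nuclearNorm M = (CFC.sqrt (Mᵀ * M)).trace := by
  have hM := posSemidef_conjTranspose_mul_self M
  rw [← conjTranspose_eq_transpose_of_trivial, CFC.sqrt_eq_real_sqrt _ hM.nonneg, cfcₙ_eq_cfc,
    hM.1.cfc_eq]
  simp [IsHermitian.cfc, nuclearNorm]

lemma nuclearNorm_neg (M : Matrix (Fin m) (Fin n) ℝ) : nuclearNorm (-M) = nuclearNorm M := by
  simp [nuclearNorm_eq_trace_sqrt]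

lemma sqrt_mul_sqrt_eq_zero_of_mul_eq_zero {X Y : Matrix (Fin n) (Fin n) ℝ} (hX : 0 ≤ X)
    (hY : 0 ≤ Y) (hXY : X * Y = 0) : CFC.sqrt X * CFC.sqrt Y = 0 := by
  have hsa : ∀ S : Matrix (Fin n) (Fin n) ℝ, (CFC.sqrt S)ᴴ = CFC.sqrt S := fun S =>
    (nonneg_iff_posSemidef.mp (CFC.sqrt_nonneg S)).1
  rw [← trace_conjTranspose_mul_self_eq_zero_iff, conjTranspose_mul, hsa, hsa, mul_assoc,
    ← mul_assoc (CFC.sqrt X), CFC.sqrt_mul_sqrt_self X hX, trace_mul_comm, mul_assoc,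
    CFC.sqrt_mul_sqrt_self Y hY, hXY, trace_zero]

lemma sqrt_add_of_mul_eq_zero {X Y : Matrix (Fin n) (Fin n) ℝ} (hX : 0 ≤ X) (hY : 0 ≤ Y)
    (hXY : X * Y = 0) : CFC.sqrt (X + Y) = CFC.sqrt X + CFC.sqrt Y := by
  have hYX : Y * X = 0 := by
    simpa [hX.isSelfAdjoint.star_eq, hY.isSelfAdjoint.star_eq] using congrArg star hXY
  refine CFC.sqrt_unique ?_ (add_nonneg (CFC.sqrt_nonneg X) (CFC.sqrt_nonneg Y))
  rw [add_mul, mul_add, mul_add, CFC.sqrt_mul_sqrt_self X hX, CFC.sqrt_mul_sqrt_self Y hY,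
    sqrt_mul_sqrt_eq_zero_of_mul_eq_zero hX hY hXY, sqrt_mul_sqrt_eq_zero_of_mul_eq_zero hY hX hYX,
    add_zero, zero_add]

lemma nuclearNorm_add_of_orthogonal {A B : Matrix (Fin m) (Fin n) ℝ} (hcol : Aᵀ * B = 0)
    (hrow : A * Bᵀ = 0) : nuclearNorm (A + B) = nuclearNorm A + nuclearNorm B := by
  have hgram : (A + B)ᵀ * (A + B) = Aᵀ * A + Bᵀ * B := by
    have : Bᵀ * A = 0 := by simpa using congrArg transpose hcol
    rw [transpose_add, Matrix.add_mul, Matrix.mul_add, Matrix.mul_add, hcol, this, add_zero,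
      zero_add]
  have hnonneg : ∀ M : Matrix (Fin m) (Fin n) ℝ, 0 ≤ Mᵀ * M := fun M => by
    simpa using (posSemidef_conjTranspose_mul_self M).nonneg
  rw [nuclearNorm_eq_trace_sqrt, hgram, sqrt_add_of_mul_eq_zero (hnonneg A) (hnonneg B)
    (by rw [Matrix.mul_assoc, ← Matrix.mul_assoc A, hrow, Matrix.zero_mul, Matrix.mul_zero]),
    trace_add, ← nuclearNorm_eq_trace_sqrt, ← nuclearNorm_eq_trace_sqrt]

lemma nuclearNorm_add_sub_le_of_orthogonal {X Δ1 Δ2 : Matrix (Fin m) (Fin n) ℝ}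
    (hcol : Xᵀ * Δ2 = 0) (hrow : X * Δ2ᵀ = 0) :
    nuclearNorm X + nuclearNorm Δ2 - nuclearNorm Δ1 ≤ nuclearNorm (X + Δ2 + Δ1) := by
  have h := nuclearNorm_add_le (X + Δ2 + Δ1) (-Δ1)
  rw [add_neg_cancel_right, nuclearNorm_add_of_orthogonal hcol hrow, nuclearNorm_neg] at h
  linarith

end NuclearNorm

section Orthogonality
variable {R a b r r' s t : Type*} [CommRing R]

lemma transpose_mul_eq_zero_of_eq_mul_mul [Fintype a] [Fintype r] [Fintype r'] [Fintype s]
    {A : Matrix a b R} {Uk : Matrix a r R} {D : Matrix r r' R} {Vk : Matrix b r' R}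
    {Uc : Matrix a s R} (hA : A = Uk * D * Vkᵀ) (hU : Ukᵀ * Uc = 0) (W : Matrix s b R) :
    Aᵀ * (Uc * W) = 0 := by
  rw [hA, transpose_mul, transpose_mul, transpose_transpose, Matrix.mul_assoc, Matrix.mul_assoc,
    ← Matrix.mul_assoc Ukᵀ, hU, Matrix.zero_mul, Matrix.mul_zero, Matrix.mul_zero]

lemma mul_transpose_eq_zero_of_eq_mul_mul [Fintype b] [Fintype r] [Fintype r'] [Fintype t]
    {A : Matrix a b R} {Uk : Matrix a r R} {D : Matrix r r' R} {Vk : Matrix b r' R}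
    {Vc : Matrix b t R} (hA : A = Uk * D * Vkᵀ) (hV : Vkᵀ * Vc = 0) (W : Matrix a t R) :
    A * (W * Vcᵀ)ᵀ = 0 := by
  rw [hA, transpose_mul, transpose_transpose, Matrix.mul_assoc, ← Matrix.mul_assoc Vkᵀ, hV,
    Matrix.zero_mul, Matrix.mul_zero]

end Orthogonality

lemma sub_le_traceInner_div_of_objective_le {a b : ℕ} {T penH pen0 : ℝ} (hT : 0 ≤ T)
    (E W : Matrix (Fin a) (Fin b) ℝ)
    (h : 1 / (2 * T) * frobNorm (E - W) ^ 2 + penH ≤ 1 / (2 * T) * frobNorm E ^ 2 + pen0) :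
    penH - pen0 ≤ traceInner E W / T := by
  have hW : 0 ≤ 1 / (2 * T) * frobNorm W ^ 2 := by positivity
  have hexpand : 1 / (2 * T) * frobNorm (E - W) ^ 2 =
      1 / (2 * T) * frobNorm E ^ 2 - traceInner E W / T + 1 / (2 * T) * frobNorm W ^ 2 := by
    rw [frobNorm_sub_sq]; ring
  linarith

lemma penalty_sub_le_of_objective_le {p m T d : ℕ} {Y E : Matrix (Fin p) (Fin T) ℝ}
    {Z : Matrix (Fin m) (Fin T) ℝ} {P : Fin d → Matrix (Fin p) (Fin T) ℝ}
    {A Ah : Matrix (Fin p) (Fin m) ℝ} {Φ Φh : Fin d → Matrix (Fin p) (Fin p) ℝ}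
    {penH pen0 : ℝ}
    (hmodel : Y = A * Z + (∑ i, Φ i * P i) + E)
    (hopt : 1 / (2 * (T : ℝ)) * frobNorm (Y - Ah * Z - ∑ i, Φh i * P i) ^ 2 + penH
      ≤ 1 / (2 * (T : ℝ)) * frobNorm (Y - A * Z - ∑ i, Φ i * P i) ^ 2 + pen0) :
    penH - pen0 ≤ (traceInner (E * Zᵀ) (Ah - A)
      + ∑ i, traceInner (E * (P i)ᵀ) (Φh i - Φ i)) / T := by
  set W := (Ah - A) * Z + ∑ i, (Φh i - Φ i) * P i
  have hresid : Y - Ah * Z - ∑ i, Φh i * P i = E - W := by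
    simp only [W, hmodel, Matrix.sub_mul, Finset.sum_sub_distrib]
    abel
  have htruth : Y - A * Z - ∑ i, Φ i * P i = E := by
    rw [hmodel]; abel
  rw [hresid, htruth] at hopt
  convert sub_le_traceInner_div_of_objective_le (Nat.cast_nonneg T) E W hopt using 2
  simp only [W, traceInner_add_right, traceInner_sum_right, traceInner_mul_right]

lemma traceInner_div_le_of_div_mul_opNorm_le {a b : ℕ} {T c lam : ℝ} (hT : 0 ≤ T) (hc : 0 < c)
    {G : Matrix (Fin a) (Fin b) ℝ} (hlam : c / T * opNorm G ≤ lam)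
    (X : Matrix (Fin a) (Fin b) ℝ) : traceInner G X / T ≤ lam / c * nuclearNorm X := by
  rcases hT.eq_or_lt with rfl | hT
  · simp only [div_zero, zero_mul] at hlam ⊢
    exact mul_nonneg (div_nonneg hlam hc.le) (nuclearNorm_nonneg X)
  calc traceInner G X / T ≤ opNorm G * nuclearNorm X / T := by
        gcongr; exact traceInner_le_opNorm_mul_nuclearNorm X G
    _ = c / T * opNorm G * nuclearNorm X / c := by field_simp
    _ ≤ lam * nuclearNorm X / c := by gcongr; exact nuclearNorm_nonneg X
    _ = lam / c * nuclearNorm X := by ring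

lemma penalty_sub_add_traceInner_le {a b r r' s t : ℕ} {T c lam : ℝ} (hT : 0 ≤ T) (hc : 0 < c)
    {G X Xh Δ1 Δ2 : Matrix (Fin a) (Fin b) ℝ} {Uk : Matrix (Fin a) (Fin r) ℝ}
    {Uc : Matrix (Fin a) (Fin s) ℝ} {D : Matrix (Fin r) (Fin r') ℝ}
    {Vk : Matrix (Fin b) (Fin r') ℝ} {Vc : Matrix (Fin b) (Fin t) ℝ}
    (hlam : c / T * opNorm G ≤ lam)
    (hUkc : Ukᵀ * Uc = 0) (hVkc : Vkᵀ * Vc = 0) (hX : X = Uk * D * Vkᵀ)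
    (hΔ2 : Δ2 = Uc * Ucᵀ * (Xh - X) * Vc * Vcᵀ) (hΔ1 : Δ1 = Xh - X - Δ2) :
    lam * nuclearNorm X - lam * nuclearNorm Xh + traceInner G (Xh - X) / T
      ≤ (1 + c⁻¹) * (lam * nuclearNorm Δ1) - (1 - c⁻¹) * (lam * nuclearNorm Δ2) := by
  have hlam0 : 0 ≤ lam := (mul_nonneg (div_nonneg hc.le hT) (opNorm_nonneg G)).trans hlam
  have hsplit : Xh - X = Δ1 + Δ2 := by rw [hΔ1]; abel
  have hcol : Xᵀ * Δ2 = 0 := by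
    rw [hΔ2, Matrix.mul_assoc Uc, Matrix.mul_assoc Uc, Matrix.mul_assoc Uc]
    exact transpose_mul_eq_zero_of_eq_mul_mul hX hUkc _
  have hrow : X * Δ2ᵀ = 0 := by
    rw [hΔ2]
    exact mul_transpose_eq_zero_of_eq_mul_mul hX hVkc _
  have hdecomp : nuclearNorm X + nuclearNorm Δ2 - nuclearNorm Δ1 ≤ nuclearNorm Xh := by
    rw [show Xh = X + Δ2 + Δ1 by rw [hΔ1]; abel]
    exact nuclearNorm_add_sub_le_of_orthogonal hcol hrow
  have hdual : traceInner G (Xh - X) / T ≤ lam / c * (nuclearNorm Δ1 + nuclearNorm Δ2) :=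
    (traceInner_div_le_of_div_mul_opNorm_le hT hc hlam _).trans <| by
      rw [hsplit]; gcongr; exact nuclearNorm_add_le Δ1 Δ2
  have hpen := mul_le_mul_of_nonneg_left hdecomp hlam0
  calc _ ≤ lam * (nuclearNorm Δ1 - nuclearNorm Δ2)
        + lam / c * (nuclearNorm Δ1 + nuclearNorm Δ2) := by linarith
    _ = _ := by ring

theorem stmt_8_general
    (p m T d : ℕ)
    (Y E : Matrix (Fin p) (Fin T) ℝ) (Z : Matrix (Fin m) (Fin T) ℝ)
    (P : Fin d → Matrix (Fin p) (Fin T) ℝ)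
    (A Ah : Matrix (Fin p) (Fin m) ℝ)
    (Φ Φh : Fin d → Matrix (Fin p) (Fin p) ℝ)
    (hmodel : Y = A * Z + (∑ i, Φ i * P i) + E)
    (lA : ℝ) (l : Fin d → ℝ) (hlA0 : 0 < lA)
    (hlA : lA ≥ 3 / (T : ℝ) * opNorm (E * Zᵀ))
    (hl : ∀ i, l i ≥ 2 / (T : ℝ) * opNorm (E * (P i)ᵀ))
    (hopt :
      (1 / (2 * (T : ℝ))) * frobNorm (Y - Ah * Z - ∑ i, Φh i * P i) ^ 2
          + lA * nuclearNorm Ah + ∑ i, l i * nuclearNorm (Φh i)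
        ≤ (1 / (2 * (T : ℝ))) * frobNorm (Y - A * Z - ∑ i, Φ i * P i) ^ 2
          + lA * nuclearNorm A + ∑ i, l i * nuclearNorm (Φ i))
    -- SVD-induced decomposition for `A`
    (kA : ℕ)
    (UkA : Matrix (Fin p) (Fin kA) ℝ) (UcA : Matrix (Fin p) (Fin (p - kA)) ℝ)
    (VkA : Matrix (Fin m) (Fin kA) ℝ) (VcA : Matrix (Fin m) (Fin (m - kA)) ℝ)
    (hUkcA : UkAᵀ * UcA = 0)
    (hVkcA : VkAᵀ * VcA = 0)
    (DA : Matrix (Fin kA) (Fin kA) ℝ) (hAdec : A = UkA * DA * VkAᵀ)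
    (ΔA1 ΔA2 : Matrix (Fin p) (Fin m) ℝ)
    (hΔA2 : ΔA2 = UcA * UcAᵀ * (Ah - A) * VcA * VcAᵀ) (hΔA1 : ΔA1 = (Ah - A) - ΔA2)
    -- SVD-induced decompositions for each `Φ i`
    (k : Fin d → ℕ)
    (Uk : ∀ i, Matrix (Fin p) (Fin (k i)) ℝ) (Uc : ∀ i, Matrix (Fin p) (Fin (p - k i)) ℝ)
    (Vk : ∀ i, Matrix (Fin p) (Fin (k i)) ℝ) (Vc : ∀ i, Matrix (Fin p) (Fin (p - k i)) ℝ)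
    (hUkc : ∀ i, (Uk i)ᵀ * Uc i = 0)
    (hVkc : ∀ i, (Vk i)ᵀ * Vc i = 0)
    (D : ∀ i, Matrix (Fin (k i)) (Fin (k i)) ℝ)
    (hΦdec : ∀ i, Φ i = Uk i * D i * (Vk i)ᵀ)
    (Δ1 Δ2 : Fin d → Matrix (Fin p) (Fin p) ℝ)
    (hΔ2 : ∀ i, Δ2 i = Uc i * (Uc i)ᵀ * (Φh i - Φ i) * Vc i * (Vc i)ᵀ)
    (hΔ1 : ∀ i, Δ1 i = (Φh i - Φ i) - Δ2 i) :
    lA * nuclearNorm ΔA2 + ∑ i, l i * nuclearNorm (Δ2 i)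
      ≤ 3 * lA * nuclearNorm ΔA1 + 3 * ∑ i, l i * nuclearNorm (Δ1 i) := by
  rw [add_assoc, add_assoc] at hopt
  have hbasic := penalty_sub_le_of_objective_le hmodel hopt
  have hA := penalty_sub_add_traceInner_le (Nat.cast_nonneg T) three_pos hlA hUkcA hVkcA hAdec
    hΔA2 hΔA1
  have hΦ := Finset.sum_le_sum fun i (_ : i ∈ Finset.univ) =>
    penalty_sub_add_traceInner_le (Nat.cast_nonneg T) two_pos (hl i) (hUkc i) (hVkc i)
      (hΦdec i) (hΔ2 i) (hΔ1 i)
  rw [Finset.sum_add_distrib, Finset.sum_sub_distrib, Finset.sum_sub_distrib, ← Finset.mul_sum,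
    ← Finset.mul_sum, ← Finset.sum_div] at hΦ
  rw [add_div] at hbasic
  have hA1 := mul_nonneg hlA0.le (nuclearNorm_nonneg ΔA1)
  have hA2 := mul_nonneg hlA0.le (nuclearNorm_nonneg ΔA2)
  linarith

/-- Cone membership in the proof of Theorem 4 for the integrative reduced-rank
estimator. -/
theorem stmt_8
    (p m T d : ℕ) (hp : 0 < p) (hm : 0 < m) (hT : 0 < T) (hd : 0 < d)
    (Y E : Matrix (Fin p) (Fin T) ℝ) (Z : Matrix (Fin m) (Fin T) ℝ)
    (P : Fin d → Matrix (Fin p) (Fin T) ℝ)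
    (A Ah : Matrix (Fin p) (Fin m) ℝ)
    (Φ Φh : Fin d → Matrix (Fin p) (Fin p) ℝ)
    (hmodel : Y = A * Z + (∑ i, Φ i * P i) + E)
    (lA : ℝ) (l : Fin d → ℝ) (hlA0 : 0 < lA) (hl0 : ∀ i, 0 < l i)
    (hlA : lA ≥ 3 / (T : ℝ) * opNorm (E * Zᵀ))
    (hl : ∀ i, l i ≥ 2 / (T : ℝ) * opNorm (E * (P i)ᵀ))
    (hopt :
      (1 / (2 * (T : ℝ))) * frobNorm (Y - Ah * Z - ∑ i, Φh i * P i) ^ 2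
          + lA * nuclearNorm Ah + ∑ i, l i * nuclearNorm (Φh i)
        ≤ (1 / (2 * (T : ℝ))) * frobNorm (Y - A * Z - ∑ i, Φ i * P i) ^ 2
          + lA * nuclearNorm A + ∑ i, l i * nuclearNorm (Φ i))
    -- SVD-induced decomposition for `A`
    (kA : ℕ)
    (UkA : Matrix (Fin p) (Fin kA) ℝ) (UcA : Matrix (Fin p) (Fin (p - kA)) ℝ)
    (VkA : Matrix (Fin m) (Fin kA) ℝ) (VcA : Matrix (Fin m) (Fin (m - kA)) ℝ)
    (hUkA : UkAᵀ * UkA = 1) (hUcA : UcAᵀ * UcA = 1) (hUkcA : UkAᵀ * UcA = 0)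
    (hUfullA : UkA * UkAᵀ + UcA * UcAᵀ = 1)
    (hVkA : VkAᵀ * VkA = 1) (hVcA : VcAᵀ * VcA = 1) (hVkcA : VkAᵀ * VcA = 0)
    (hVfullA : VkA * VkAᵀ + VcA * VcAᵀ = 1)
    (DA : Matrix (Fin kA) (Fin kA) ℝ) (hAdec : A = UkA * DA * VkAᵀ)
    (ΔA1 ΔA2 : Matrix (Fin p) (Fin m) ℝ)
    (hΔA2 : ΔA2 = UcA * UcAᵀ * (Ah - A) * VcA * VcAᵀ) (hΔA1 : ΔA1 = (Ah - A) - ΔA2)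
    -- SVD-induced decompositions for each `Φ i`
    (k : Fin d → ℕ)
    (Uk : ∀ i, Matrix (Fin p) (Fin (k i)) ℝ) (Uc : ∀ i, Matrix (Fin p) (Fin (p - k i)) ℝ)
    (Vk : ∀ i, Matrix (Fin p) (Fin (k i)) ℝ) (Vc : ∀ i, Matrix (Fin p) (Fin (p - k i)) ℝ)
    (hUk : ∀ i, (Uk i)ᵀ * Uk i = 1) (hUc : ∀ i, (Uc i)ᵀ * Uc i = 1)
    (hUkc : ∀ i, (Uk i)ᵀ * Uc i = 0)
    (hUfull : ∀ i, Uk i * (Uk i)ᵀ + Uc i * (Uc i)ᵀ = 1)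
    (hVk : ∀ i, (Vk i)ᵀ * Vk i = 1) (hVc : ∀ i, (Vc i)ᵀ * Vc i = 1)
    (hVkc : ∀ i, (Vk i)ᵀ * Vc i = 0)
    (hVfull : ∀ i, Vk i * (Vk i)ᵀ + Vc i * (Vc i)ᵀ = 1)
    (D : ∀ i, Matrix (Fin (k i)) (Fin (k i)) ℝ)
    (hΦdec : ∀ i, Φ i = Uk i * D i * (Vk i)ᵀ)
    (Δ1 Δ2 : Fin d → Matrix (Fin p) (Fin p) ℝ)
    (hΔ2 : ∀ i, Δ2 i = Uc i * (Uc i)ᵀ * (Φh i - Φ i) * Vc i * (Vc i)ᵀ)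
    (hΔ1 : ∀ i, Δ1 i = (Φh i - Φ i) - Δ2 i) :
    lA * nuclearNorm ΔA2 + ∑ i, l i * nuclearNorm (Δ2 i)
      ≤ 3 * lA * nuclearNorm ΔA1 + 3 * ∑ i, l i * nuclearNorm (Δ1 i) :=
  stmt_8_general p m T d Y E Z P A Ah Φ Φh hmodel lA l hlA0 hlA hl hopt kA UkA UcA VkA VcA hUkcA
    hVkcA DA hAdec ΔA1 ΔA2 hΔA2 hΔA1 k Uk Uc Vk Vc hUkc hVkc D hΦdec Δ1 Δ2 hΔ2 hΔ1
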